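/- arXiv:2210.05656 — 3 statements merged into one kernel-verified Lean document; each statement's English description precedes it below -/
import Mathlib

section
/- Let T > 0, β > 0, δ > 0 and γ > 0, and let y : [0,T] → ℝ be a continuous nonnegative function satisfying y(t) ≥ β + δ ∫₀ᵗ y(τ)^{1+γ} dτ for all t ∈ (0,T). Then T ≤ 1/(γ δ β^γ). -/
open MeasureTheory

theorem blowup_time_upper_bound
    (T β δ γ : ℝ) (hT : 0 < T) (hβ : 0 < β) (hδ : 0 < δ) (hγ : 0 < γ)
    (y : ℝ → ℝ) (hcont : ContinuousOn y (Set.Icc 0 T))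
    (hnonneg : ∀ t ∈ Set.Icc (0:ℝ) T, 0 ≤ y t)
    (hineq : ∀ t ∈ Set.Ioo (0:ℝ) T,
      β + δ * ∫ τ in (0:ℝ)..t, (y τ) ^ (1 + γ) ≤ y t) :
    T ≤ 1 / (γ * δ * β ^ γ) := by
  set f : ℝ → ℝ := fun τ => y τ ^ (1 + γ) with hf
  have hfc : ContinuousOn f (Set.Icc 0 T) := by
    apply hcont.rpow_const
    intro x hx
    exact Or.inr (by linarith)
  have hfnn : ∀ t ∈ Set.Icc (0:ℝ) T, 0 ≤ f t := fun t ht =>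
    Real.rpow_nonneg (hnonneg t ht) _
  set F : ℝ → ℝ := fun t => β + δ * ∫ τ in (0:ℝ)..t, f τ with hF
  have hFpos : ∀ t ∈ Set.Icc (0:ℝ) T, 0 < F t := by
    intro t ht
    have hint : 0 ≤ ∫ τ in (0:ℝ)..t, f τ := by
      apply intervalIntegral.integral_nonneg ht.1
      intro u hu
      exact hfnn u ⟨hu.1, hu.2.trans ht.2⟩
    have : 0 ≤ δ * ∫ τ in (0:ℝ)..t, f τ := mul_nonneg hδ.le hint
    simp only [hF]; linarith
  have huIcc : Set.uIcc (0:ℝ) T = Set.Icc 0 T := Set.uIcc_of_le hT.le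
  have hfint : IntegrableOn f (Set.uIcc 0 T) := by
    rw [huIcc]
    exact hfc.integrableOn_compact isCompact_Icc
  have hFcont : ContinuousOn F (Set.Icc 0 T) := by
    have := intervalIntegral.continuousOn_primitive_interval hfint
    rw [huIcc] at this
    exact continuousOn_const.add (continuousOn_const.mul this)
  have hFderiv : ∀ t ∈ Set.Ioo (0:ℝ) T, HasDerivAt F (δ * f t) t := by
    intro t ht
    have hmem : Set.Icc (0:ℝ) T ∈ nhds t :=
      Filter.mem_of_superset (isOpen_Ioo.mem_nhds ht) Set.Ioo_subset_Icc_self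
    have hca : ContinuousAt f t := hfc.continuousAt hmem
    have hii : IntervalIntegrable f volume 0 t := by
      apply hfint.mono_set _ |>.intervalIntegrable
      rw [Set.uIcc_of_le ht.1.le, huIcc]
      exact Set.Icc_subset_Icc le_rfl ht.2.le
    have hmeas : StronglyMeasurableAtFilter f (nhds t) :=
      ⟨Set.Icc 0 T, hmem, (hfc.mono le_rfl).aestronglyMeasurable measurableSet_Icc⟩
    have h1 : HasDerivAt (fun u => ∫ τ in (0:ℝ)..u, f τ) (f t) t :=
      intervalIntegral.integral_hasDerivAt_right hii hmeas hca
    simpa [hF] using (h1.const_mul δ).const_add β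
  set G : ℝ → ℝ := fun t => F t ^ (-γ) + γ * δ * t with hG
  have hGderiv : ∀ t ∈ Set.Ioo (0:ℝ) T,
      HasDerivAt G (-γ * F t ^ (-γ - 1) * (δ * f t) + γ * δ) t := by
    intro t ht
    have hFne : F t ≠ 0 := (hFpos t (Set.Ioo_subset_Icc_self ht)).ne'
    have h1 : HasDerivAt (fun x : ℝ => x ^ (-γ)) (-γ * F t ^ (-γ - 1)) (F t) :=
      Real.hasDerivAt_rpow_const (Or.inl hFne)
    have h2 := h1.comp t (hFderiv t ht)
    have h3 : HasDerivAt (fun u : ℝ => γ * δ * u) (γ * δ) t := by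
      simpa using (hasDerivAt_id t).const_mul (γ * δ)
    exact h2.add h3
  have hGanti : AntitoneOn G (Set.Icc 0 T) := by
    apply antitoneOn_of_deriv_nonpos (convex_Icc 0 T)
    · apply ContinuousOn.add _ (continuousOn_const.mul continuousOn_id)
      apply hFcont.rpow_const
      intro x hx
      exact Or.inl (hFpos x hx).ne'
    · intro x hx
      rw [interior_Icc] at hx
      exact (hGderiv x hx).differentiableAt.differentiableWithinAt
    · intro x hx
      rw [interior_Icc] at hx
      rw [(hGderiv x hx).deriv]
      have hxI : x ∈ Set.Icc (0:ℝ) T := Set.Ioo_subset_Icc_self hx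
      have hFx : 0 < F x := hFpos x hxI
      have hFy : F x ≤ y x := hineq x hx
      have hfx : F x ^ (1 + γ) ≤ f x :=
        Real.rpow_le_rpow hFx.le hFy (by positivity)
      have hA : (0:ℝ) < F x ^ (-γ - 1) := Real.rpow_pos_of_pos hFx _
      have hprod : (1:ℝ) ≤ F x ^ (-γ - 1) * f x := by
        calc (1:ℝ) = F x ^ (-γ - 1) * F x ^ (1 + γ) := by
              rw [← Real.rpow_add hFx]
              have he : -γ - 1 + (1 + γ) = 0 := by ring
              rw [he, Real.rpow_zero]
          _ ≤ F x ^ (-γ - 1) * f x := by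
              exact mul_le_mul_of_nonneg_left hfx hA.le
      nlinarith [mul_pos hγ hδ]
  -- conclude
  have hβγ : (0:ℝ) < β ^ γ := Real.rpow_pos_of_pos hβ γ
  set c : ℝ := 1 / (γ * δ * β ^ γ) with hc
  have hcpos : 0 < c := by positivity
  by_contra hcon
  push_neg at hcon
  set t : ℝ := (c + T) / 2 with ht
  have htmem : t ∈ Set.Ioo (0:ℝ) T := ⟨by positivity, by simp only [ht]; linarith⟩
  have h1 : G t ≤ G 0 := hGanti ⟨le_rfl, hT.le⟩ (Set.Ioo_subset_Icc_self htmem) htmem.1.le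
  have hG0 : G 0 = β ^ (-γ) := by
    simp [hG, hF]
  have hFt : 0 < F t ^ (-γ) := Real.rpow_pos_of_pos (hFpos t (Set.Ioo_subset_Icc_self htmem)) _
  have h2 : γ * δ * t < β ^ (-γ) := by
    rw [hG0] at h1
    simp only [hG] at h1
    linarith
  rw [Real.rpow_neg hβ.le] at h2
  have h3 : γ * δ * t * β ^ γ < (β ^ γ)⁻¹ * β ^ γ :=
    mul_lt_mul_of_pos_right h2 hβγ
  rw [inv_mul_cancel₀ hβγ.ne'] at h3
  have h4 : t < c := by
    rw [hc, lt_div_iff₀ (by positivity)]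
    nlinarith [h3]
  have : c < t := by simp only [ht]; linarith
  linarith
end

section
/- Let L > 0, b > 0 and 0 < a < b + 1, and let w : (0,L) → [0,∞) be measurable. Then the Lebesgue integrals (with values in [0,∞]) satisfy ∫₀^L s^{−a−1} w(s)^{b+1} ds ≥ ((b+1−a)/L^{b+1−a})^{1/b} · ( ∫₀^L s^{−a} w(s)^b ds )^{(b+1)/b}. -/
/-!
Write `s^{-a} w^b = (s^{b-a})^{1/(b+1)} (s^{-a-1} w^{b+1})^{b/(b+1)}` and apply Hölder's inequality
with exponents `b + 1` and `(b + 1)/b`. The weight `s^{b-a}` is integrable on `(0, L)` precisely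
because `a < b + 1`, with integral `L^{b+1-a}/(b+1-a)`; raising the Hölder bound to the power
`(b + 1)/b` gives the estimate.
-/

open MeasureTheory Set
open scoped ENNReal

theorem ENNReal.rpow_lintegral_rpow_mul_rpow_le {α : Type*} [MeasurableSpace α] {μ : Measure α}
    {b : ℝ} (hb : 0 < b) {h G : α → ℝ≥0∞} (hh : AEMeasurable h μ) (hG : AEMeasurable G μ) :
    (∫⁻ x, h x ^ (1 / (b + 1)) * G x ^ (b / (b + 1)) ∂μ) ^ ((b + 1) / b)
      ≤ (∫⁻ x, h x ∂μ) ^ (1 / b) * ∫⁻ x, G x ∂μ := by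
  have hb1 : b + 1 ≠ 0 := by linarith
  have holder := ENNReal.lintegral_mul_norm_pow_le hh hG (by positivity) (by positivity)
    (by field_simp; ring : 1 / (b + 1) + b / (b + 1) = 1)
  calc (∫⁻ x, h x ^ (1 / (b + 1)) * G x ^ (b / (b + 1)) ∂μ) ^ ((b + 1) / b)
      ≤ ((∫⁻ x, h x ∂μ) ^ (1 / (b + 1)) * (∫⁻ x, G x ∂μ) ^ (b / (b + 1))) ^ ((b + 1) / b) :=
        ENNReal.rpow_le_rpow holder (by positivity)
    _ = (∫⁻ x, h x ∂μ) ^ (1 / b) * ∫⁻ x, G x ∂μ := by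
        have hh_exp : 1 / (b + 1) * ((b + 1) / b) = 1 / b := by field_simp
        have hG_exp : b / (b + 1) * ((b + 1) / b) = 1 := by field_simp
        rw [ENNReal.mul_rpow_of_nonneg _ _ (by positivity), ← ENNReal.rpow_mul, ← ENNReal.rpow_mul,
          hh_exp, hG_exp, ENNReal.rpow_one]

theorem lintegral_Ioo_zero_ofReal_rpow {r : ℝ} (hr : -1 < r) {L : ℝ} (hL : 0 ≤ L) :
    ∫⁻ s in Ioo 0 L, ENNReal.ofReal (s ^ r) = ENNReal.ofReal (L ^ (r + 1) / (r + 1)) := by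
  have hint : IntegrableOn (fun s : ℝ => s ^ r) (Ioo 0 L) :=
    (intervalIntegrable_iff_integrableOn_Ioo_of_le hL).mp
      (intervalIntegral.intervalIntegrable_rpow' hr)
  rw [← ofReal_integral_eq_lintegral_ofReal hint
      ((ae_restrict_mem measurableSet_Ioo).mono fun s hs => Real.rpow_nonneg hs.1.le r),
    ← integral_Ioc_eq_integral_Ioo, ← intervalIntegral.integral_of_le hL, integral_rpow (.inl hr),
    Real.zero_rpow (by linarith), sub_zero]

theorem Real.rpow_neg_mul_rpow_eq_rpow_mul_rpow {s x : ℝ} (hs : 0 < s) (hx : 0 ≤ x) {a b : ℝ}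
    (hb : b + 1 ≠ 0) :
    s ^ (-a) * x ^ b
      = (s ^ (b - a)) ^ (1 / (b + 1)) * (s ^ (-a - 1) * x ^ (b + 1)) ^ (b / (b + 1)) := by
  rw [Real.mul_rpow (Real.rpow_nonneg hs.le _) (Real.rpow_nonneg hx _), ← Real.rpow_mul hs.le,
    ← Real.rpow_mul hs.le, ← Real.rpow_mul hx, ← mul_assoc, ← Real.rpow_add hs]
  congr 2
  · field_simp
    ring
  · field_simp

theorem reverse_holder_moment_estimate_general
    (L b a : ℝ) (hL : 0 < L) (hb : 0 < b) (hab : a < b + 1)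
    (w : ℝ → ℝ) (hw : Measurable w)
    (hwnonneg : ∀ s ∈ Set.Ioo (0:ℝ) L, 0 ≤ w s) :
    ENNReal.ofReal (((b + 1 - a) / L ^ (b + 1 - a)) ^ (1 / b)) *
      (∫⁻ s in Set.Ioo (0:ℝ) L, ENNReal.ofReal (s ^ (-a) * w s ^ b)) ^ ((b + 1) / b)
    ≤ ∫⁻ s in Set.Ioo (0:ℝ) L, ENNReal.ofReal (s ^ (-a - 1) * w s ^ (b + 1)) := by
  have hc : 0 < b + 1 - a := by linarith
  have hLc : 0 < L ^ (b + 1 - a) / (b + 1 - a) := by positivity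
  have hsplit : ∫⁻ s in Ioo 0 L, ENNReal.ofReal (s ^ (-a) * w s ^ b)
      = ∫⁻ s in Ioo 0 L, ENNReal.ofReal (s ^ (b - a)) ^ (1 / (b + 1))
          * ENNReal.ofReal (s ^ (-a - 1) * w s ^ (b + 1)) ^ (b / (b + 1)) := by
    refine setLIntegral_congr_fun measurableSet_Ioo fun s hs => ?_
    have hs0 : 0 < s := hs.1
    have hws : 0 ≤ w s := hwnonneg s hs
    rw [Real.rpow_neg_mul_rpow_eq_rpow_mul_rpow hs0 hws (by linarith),
      ENNReal.ofReal_mul (by positivity), ENNReal.ofReal_rpow_of_pos (by positivity),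
      ENNReal.ofReal_rpow_of_nonneg (mul_nonneg (by positivity) (by positivity)) (by positivity)]
  have hweight : ∫⁻ s in Ioo 0 L, ENNReal.ofReal (s ^ (b - a))
      = ENNReal.ofReal (L ^ (b + 1 - a) / (b + 1 - a)) := by
    rw [lintegral_Ioo_zero_ofReal_rpow (by linarith) hL.le, sub_add_eq_add_sub]
  have hholder := ENNReal.rpow_lintegral_rpow_mul_rpow_le hb (μ := volume.restrict (Ioo 0 L))
    (h := fun s => ENNReal.ofReal (s ^ (b - a)))
    (G := fun s => ENNReal.ofReal (s ^ (-a - 1) * w s ^ (b + 1))) (by fun_prop) (by fun_prop)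
  rw [← hsplit, hweight] at hholder
  rw [ENNReal.mul_le_iff_le_inv (ENNReal.ofReal_pos.2 (by positivity)).ne' ENNReal.ofReal_ne_top,
    ← ENNReal.ofReal_inv_of_pos (by positivity), ← Real.inv_rpow (by positivity), inv_div,
    ← ENNReal.ofReal_rpow_of_pos hLc]
  exact hholder

theorem reverse_holder_moment_estimate
    (L b a : ℝ) (hL : 0 < L) (hb : 0 < b) (ha : 0 < a) (hab : a < b + 1)
    (w : ℝ → ℝ) (hw : Measurable w)
    (hwnonneg : ∀ s ∈ Set.Ioo (0:ℝ) L, 0 ≤ w s) :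
    ENNReal.ofReal (((b + 1 - a) / L ^ (b + 1 - a)) ^ (1 / b)) *
      (∫⁻ s in Set.Ioo (0:ℝ) L, ENNReal.ofReal (s ^ (-a) * w s ^ b)) ^ ((b + 1) / b)
    ≤ ∫⁻ s in Set.Ioo (0:ℝ) L, ENNReal.ofReal (s ^ (-a - 1) * w s ^ (b + 1)) :=
  reverse_holder_moment_estimate_general L b a hL hb hab w hw hwnonneg
end

section
/- Let T > 0, 𝒜 > 0 and γ > 1. Let Ψ : [0,T) → (0,∞) be differentiable with Ψ'(t) ≤ 𝒜 Ψ(t)^{γ} for all t ∈ [0,T), and suppose limsup_{t → T⁻} Ψ(t) = ∞. Then T ≥ 1/(𝒜 (γ−1) Ψ(0)^{γ−1}). -/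
/-!
Under `Ψ' ≤ A Ψ ^ γ` the quantity `Ψ t ^ (1 - γ) + (γ - 1) A t` is nondecreasing (it is constant
for the solution of `Ψ' = A Ψ ^ γ`). Letting `t → T` along times where `Ψ` is large, so that
`Ψ t ^ (1 - γ)` is small, gives `Ψ 0 ^ (1 - γ) ≤ (γ - 1) A T`.
-/

open Filter

open Set Topology

section Comparison

variable {D : Set ℝ} {A γ : ℝ} {Ψ Ψ' : ℝ → ℝ}

lemma HasDerivWithinAt.rpow_one_sub_add_mul {t : ℝ} (h : HasDerivWithinAt Ψ (Ψ' t) D t)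
    (ht : 0 < Ψ t) :
    HasDerivWithinAt (fun s ↦ Ψ s ^ (1 - γ) + (γ - 1) * A * s)
      ((γ - 1) * (A - Ψ t ^ (-γ) * Ψ' t)) D t := by
  refine ((h.rpow_const (p := 1 - γ) (Or.inl ht.ne')).add
    ((hasDerivWithinAt_id t D).const_mul ((γ - 1) * A))).congr_deriv ?_
  rw [show 1 - γ - 1 = -γ by ring]
  ring

lemma rpow_neg_mul_le_of_le_mul_rpow {x x' : ℝ} (hx : 0 < x) (h : x' ≤ A * x ^ γ) :
    x ^ (-γ) * x' ≤ A := by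
  calc x ^ (-γ) * x' ≤ x ^ (-γ) * (A * x ^ γ) := by gcongr
    _ = A := by rw [mul_left_comm, ← Real.rpow_add hx, neg_add_cancel, Real.rpow_zero, mul_one]

lemma monotoneOn_rpow_one_sub_add_mul (hD : Convex ℝ D) (hγ : 1 ≤ γ)
    (hpos : ∀ t ∈ D, 0 < Ψ t) (hderiv : ∀ t ∈ D, HasDerivWithinAt Ψ (Ψ' t) D t)
    (hineq : ∀ t ∈ D, Ψ' t ≤ A * Ψ t ^ γ) :
    MonotoneOn (fun t ↦ Ψ t ^ (1 - γ) + (γ - 1) * A * t) D := by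
  have hg (t) (ht : t ∈ D) := (hderiv t ht).rpow_one_sub_add_mul (A := A) (γ := γ) (hpos t ht)
  refine monotoneOn_of_hasDerivWithinAt_nonneg hD (fun t ht ↦ (hg t ht).continuousWithinAt)
    (fun t ht ↦ (hg t (interior_subset ht)).mono interior_subset) fun t ht ↦ ?_
  have ht := interior_subset ht
  exact mul_nonneg (by linarith)
    (sub_nonneg.2 (rpow_neg_mul_le_of_le_mul_rpow (hpos t ht) (hineq t ht)))

end Comparison

lemma frequently_rpow_lt_of_forall_frequently_lt {α : Type*} {l : Filter α} {f : α → ℝ}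
    {p ε : ℝ} (hp : p < 0) (hε : 0 < ε) (hf : ∀ M, ∃ᶠ x in l, M < f x) :
    ∃ᶠ x in l, f x ^ p < ε := by
  have hlim : Tendsto (fun x : ℝ ↦ x ^ p) atTop (𝓝 0) := by
    simpa using tendsto_rpow_neg_atTop (neg_pos.2 hp)
  obtain ⟨M, hM⟩ := eventually_atTop.1 (hlim.eventually (gt_mem_nhds hε))
  exact (hf M).mono fun x hx ↦ hM _ hx.le

lemma le_of_tendsto_of_frequently_lt_of_le_add {α : Type*} {l : Filter α} {u v : α → ℝ}
    {a b : ℝ} (hu : Tendsto u l (𝓝 b)) (hv : ∀ ε > 0, ∃ᶠ x in l, v x < ε)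
    (h : ∀ᶠ x in l, a ≤ u x + v x) : a ≤ b := by
  refine le_of_forall_pos_le_add fun ε hε ↦ ?_
  have : ∃ᶠ x in l, a - ε ≤ u x := ((hv ε hε).and_eventually h).mono fun x hx ↦ by linarith
  linarith [ge_of_tendsto_of_frequently hu this]

theorem safe_existence_time_estimate_general
    (T A γ : ℝ) (hT : 0 < T) (hγ : 1 < γ)
    (Ψ Ψ' : ℝ → ℝ)
    (hpos : ∀ t ∈ Set.Ico (0:ℝ) T, 0 < Ψ t)
    (hderiv : ∀ t ∈ Set.Ico (0:ℝ) T, HasDerivWithinAt Ψ (Ψ' t) (Set.Ico 0 T) t)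
    (hineq : ∀ t ∈ Set.Ico (0:ℝ) T, Ψ' t ≤ A * Ψ t ^ γ)
    (hblow : ∀ M : ℝ, ∃ᶠ t in nhdsWithin T (Set.Iio T), M < Ψ t) :
    T ≥ 1 / (A * (γ - 1) * Ψ 0 ^ (γ - 1)) := by
  have h0 : (0 : ℝ) ∈ Ico 0 T := ⟨le_rfl, hT⟩
  have hmono := monotoneOn_rpow_one_sub_add_mul (convex_Ico 0 T) hγ.le hpos hderiv hineq
  have hkey : Ψ 0 ^ (1 - γ) ≤ (γ - 1) * A * T := by
    refine le_of_tendsto_of_frequently_lt_of_le_add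
      (((continuous_const_mul _).tendsto T).mono_left nhdsWithin_le_nhds)
      (fun ε hε ↦ frequently_rpow_lt_of_forall_frequently_lt (p := 1 - γ) (by linarith) hε
        hblow) ?_
    filter_upwards [Ico_mem_nhdsLT hT] with t ht
    simpa [add_comm] using hmono h0 ht ht.1
  have hP : 0 < Ψ 0 ^ (γ - 1) := Real.rpow_pos_of_pos (hpos 0 h0) _
  rw [show 1 - γ = -(γ - 1) by ring, Real.rpow_neg (hpos 0 h0).le] at hkey
  have hAγ : 0 < (γ - 1) * A := pos_of_mul_pos_left ((inv_pos.2 hP).trans_le hkey) hT.le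
  calc
    1 / (A * (γ - 1) * Ψ 0 ^ (γ - 1)) = (Ψ 0 ^ (γ - 1))⁻¹ / ((γ - 1) * A) := by
      rw [one_div, div_eq_mul_inv, ← mul_inv, mul_comm, mul_comm A]
    _ ≤ T := (div_le_iff₀' hAγ).2 hkey

theorem safe_existence_time_estimate
    (T A γ : ℝ) (hT : 0 < T) (hA : 0 < A) (hγ : 1 < γ)
    (Ψ Ψ' : ℝ → ℝ)
    (hpos : ∀ t ∈ Set.Ico (0:ℝ) T, 0 < Ψ t)
    (hderiv : ∀ t ∈ Set.Ico (0:ℝ) T, HasDerivWithinAt Ψ (Ψ' t) (Set.Ico 0 T) t)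
    (hineq : ∀ t ∈ Set.Ico (0:ℝ) T, Ψ' t ≤ A * Ψ t ^ γ)
    (hblow : ∀ M : ℝ, ∃ᶠ t in nhdsWithin T (Set.Iio T), M < Ψ t) :
    T ≥ 1 / (A * (γ - 1) * Ψ 0 ^ (γ - 1)) :=
  safe_existence_time_estimate_general T A γ hT hγ Ψ Ψ' hpos hderiv hineq hblow
end
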